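/- Let ψ1 on ℂ^{d1}⊗ℂ^{d1} and ψ2 on ℂ^{d2}⊗ℂ^{d2} be pure states in Schmidt form, p ∈ [0,1], and set N_i = 1/(d_i²−1). Then the multiset of eigenvalues (with multiplicity) of the partial transpose ρ_p(ψ1,ψ2)^{Γ_A} is exactly { (1−p)·N1·N2·(1−λ1)(1−λ2) + p·λ1·λ2 }, where λ1 ranges over the d1² eigenvalues (with multiplicity) of (P_{ψ1})^Γ and λ2 ranges over the d2² eigenvalues (with multiplicity) of (P_{ψ2})^Γ. -/

import Mathlib

open Matrix BigOperators
open scoped ComplexOrder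

/-- Partial transpose with respect to the first tensor factor (side A):
`X^Γ[(a,b),(a',b')] = X[(a',b),(a,b')]`. -/
def ptg {A B : Type*} (X : Matrix (A × B) (A × B) ℂ) : Matrix (A × B) (A × B) ℂ :=
  Matrix.of fun p q => X (q.1, p.2) (p.1, q.2)

/-- A pure state in Schmidt form with Schmidt coefficients `μ`:
`ψ[(i,j)] = μ_i δ_{ij}`. -/
noncomputable def schmidtVec {d : ℕ} (μ : Fin d → ℝ) : Fin d × Fin d → ℂ :=
  fun p => if p.1 = p.2 then (μ p.1 : ℂ) else 0

/-- Rank-one projection onto the vector `v`. -/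
noncomputable def projVec {n : Type*} (v : n → ℂ) : Matrix n n ℂ :=
  Matrix.of fun p q => v p * star (v q)

/-- Cut-respecting tensor product `σ ⊠ τ`. -/
def ctens {d1 d2 : ℕ} (σ : Matrix (Fin d1 × Fin d1) (Fin d1 × Fin d1) ℂ)
    (τ : Matrix (Fin d2 × Fin d2) (Fin d2 × Fin d2) ℂ) :
    Matrix ((Fin d1 × Fin d2) × (Fin d1 × Fin d2)) ((Fin d1 × Fin d2) × (Fin d1 × Fin d2)) ℂ :=
  Matrix.of fun p q => σ (p.1.1, p.2.1) (q.1.1, q.2.1) * τ (p.1.2, p.2.2) (q.1.2, q.2.2)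

/-- The state `ρ_p(ψ1,ψ2)`. -/
noncomputable def rhoP {d1 d2 : ℕ} (μ1 : Fin d1 → ℝ) (μ2 : Fin d2 → ℝ) (p : ℝ) :
    Matrix ((Fin d1 × Fin d2) × (Fin d1 × Fin d2)) ((Fin d1 × Fin d2) × (Fin d1 × Fin d2)) ℂ :=
  ((1 - p) / (((d1 : ℝ) ^ 2 - 1) * ((d2 : ℝ) ^ 2 - 1))) •
      ctens (1 - projVec (schmidtVec μ1)) (1 - projVec (schmidtVec μ2))
    + p • ctens (projVec (schmidtVec μ1)) (projVec (schmidtVec μ2))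

/-! Partial transposition preserves Hermiticity, so each `(P_ψᵢ)^Γ` is unitarily
diagonalizable, `(P_ψᵢ)^Γ = Uᵢ Dᵢ Uᵢ*`. Up to a reordering of the tensor factors, `ρ_p^{Γ_A}` is
`c (1 - (P_ψ₁)^Γ) ⊗ (1 - (P_ψ₂)^Γ) + p (P_ψ₁)^Γ ⊗ (P_ψ₂)^Γ`, which `U₁ ⊗ U₂` conjugates to
the diagonal matrix with entries `c (1 - λ₁)(1 - λ₂) + p λ₁ λ₂`. -/

open Polynomial Unitary
open scoped Kronecker

section PartialTranspose

variable {A B : Type*}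

lemma ptg_add (X Y : Matrix (A × B) (A × B) ℂ) : ptg (X + Y) = ptg X + ptg Y := rfl

lemma ptg_sub (X Y : Matrix (A × B) (A × B) ℂ) : ptg (X - Y) = ptg X - ptg Y := rfl

lemma ptg_smul {R : Type*} [SMul R ℂ] (r : R) (X : Matrix (A × B) (A × B) ℂ) :
    ptg (r • X) = r • ptg X := rfl

lemma ptg_one [DecidableEq A] [DecidableEq B] : ptg (1 : Matrix (A × B) (A × B) ℂ) = 1 := by
  ext ⟨a, b⟩ ⟨a', b'⟩
  by_cases ha : a = a' <;> by_cases hb : b = b' <;> simp [ptg, one_apply, ha, hb, eq_comm]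

lemma isHermitian_ptg {X : Matrix (A × B) (A × B) ℂ} (hX : X.IsHermitian) :
    (ptg X).IsHermitian := by
  ext p q
  simpa [ptg] using congr_fun₂ hX (q.1, p.2) (p.1, q.2)

lemma isHermitian_projVec {n : Type*} (v : n → ℂ) : (projVec v).IsHermitian := by
  ext p q; simp [projVec, mul_comm]

end PartialTranspose

lemma Multiset.product_map_map {α β γ δ : Type*} (f : α → γ) (g : β → δ) (s : Multiset α)
    (t : Multiset β) : s.map f ×ˢ t.map g = (s ×ˢ t).map (Prod.map f g) := by
  simp only [SProd.sprod, Multiset.product, Multiset.bind_map, Multiset.map_bind,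
    Multiset.map_map, Function.comp_def, Prod.map]

lemma Matrix.roots_charpoly_diagonal {K n : Type*} [Field K] [Fintype n] [DecidableEq n]
    (f : n → K) : (diagonal f).charpoly.roots = Finset.univ.val.map f := by
  rw [charpoly_diagonal, roots_prod _ _ (Finset.prod_ne_zero_iff.mpr fun i _ => X_sub_C_ne_zero _)]
  simp

section Kronecker

variable {R m n : Type*} [CommRing R] [StarRing R] [Fintype m] [DecidableEq m]
  [Fintype n] [DecidableEq n]

lemma Matrix.charpoly_conjStarAlgAut (U : unitary (Matrix n n R)) (X : Matrix n n R) :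
    (conjStarAlgAut R _ U X).charpoly = X.charpoly := by
  rw [conjStarAlgAut_apply, charpoly_mul_comm, ← mul_assoc, coe_star_mul_self, one_mul]

def Unitary.kronecker (U : unitary (Matrix m m R)) (V : unitary (Matrix n n R)) :
    unitary (Matrix (m × n) (m × n) R) :=
  ⟨(U : Matrix m m R) ⊗ₖ (V : Matrix n n R), kronecker_mem_unitary U.2 V.2⟩

lemma Matrix.conjStarAlgAut_kronecker (U : unitary (Matrix m m R)) (V : unitary (Matrix n n R))
    (X : Matrix m m R) (Y : Matrix n n R) :
    conjStarAlgAut R (Matrix (m × n) (m × n) R) (Unitary.kronecker U V) (X ⊗ₖ Y) =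
      conjStarAlgAut R (Matrix m m R) U X ⊗ₖ conjStarAlgAut R (Matrix n n R) V Y := by
  simp only [conjStarAlgAut_apply, Unitary.kronecker, star_eq_conjTranspose,
    conjTranspose_kronecker, mul_kronecker_mul]

end Kronecker

section Hermitian

variable {𝕜 m n : Type*} [RCLike 𝕜] [Fintype m] [DecidableEq m] [Fintype n] [DecidableEq n]
  {A : Matrix m m 𝕜} {B : Matrix n n 𝕜}

theorem Matrix.IsHermitian.roots_charpoly_smul_kronecker_add (hA : A.IsHermitian)
    (hB : B.IsHermitian) (a b : 𝕜) :
    (a • (1 - A) ⊗ₖ (1 - B) + b • A ⊗ₖ B).charpoly.roots =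
      (A.charpoly.roots ×ˢ B.charpoly.roots).map
        (fun z => a * (1 - z.1) * (1 - z.2) + b * z.1 * z.2) := by
  set α : m → 𝕜 := RCLike.ofReal ∘ hA.eigenvalues
  set β : n → 𝕜 := RCLike.ofReal ∘ hB.eigenvalues
  have hdiag : a • (1 - diagonal α) ⊗ₖ (1 - diagonal β) + b • diagonal α ⊗ₖ diagonal β =
      diagonal fun z => a * (1 - α z.1) * (1 - β z.2) + b * α z.1 * β z.2 := by
    simp only [← diagonal_one, diagonal_sub, diagonal_kronecker_diagonal, ← diagonal_smul,
      diagonal_add]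
    congr 1
    ext z
    simp only [Pi.smul_apply, smul_eq_mul]
    ring
  have hconj : a • (1 - A) ⊗ₖ (1 - B) + b • A ⊗ₖ B =
      conjStarAlgAut 𝕜 (Matrix (m × n) (m × n) 𝕜)
          (Unitary.kronecker hA.eigenvectorUnitary hB.eigenvectorUnitary)
        (diagonal fun z => a * (1 - α z.1) * (1 - β z.2) + b * α z.1 * β z.2) := by
    rw [← hdiag, map_add, map_smul, map_smul, conjStarAlgAut_kronecker, conjStarAlgAut_kronecker,
      map_sub, map_sub, map_one, map_one, ← hA.spectral_theorem, ← hB.spectral_theorem]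
  rw [hconj, charpoly_conjStarAlgAut, roots_charpoly_diagonal, hA.roots_charpoly_eq_eigenvalues,
    hB.roots_charpoly_eq_eigenvalues, Multiset.product_map_map, Multiset.map_map,
    ← Finset.product_val, Finset.univ_product_univ]
  rfl

end Hermitian

section CutTensor

variable {d1 d2 : ℕ}

lemma ctens_eq_reindex_kronecker (σ : Matrix (Fin d1 × Fin d1) (Fin d1 × Fin d1) ℂ)
    (τ : Matrix (Fin d2 × Fin d2) (Fin d2 × Fin d2) ℂ) :
    ctens σ τ =
      reindex (Equiv.prodProdProdComm _ _ _ _) (Equiv.prodProdProdComm _ _ _ _) (σ ⊗ₖ τ) :=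
  rfl

lemma ptg_ctens (σ : Matrix (Fin d1 × Fin d1) (Fin d1 × Fin d1) ℂ)
    (τ : Matrix (Fin d2 × Fin d2) (Fin d2 × Fin d2) ℂ) :
    ptg (ctens σ τ) = ctens (ptg σ) (ptg τ) := rfl

lemma ptg_smul_ctens_add (c p : ℝ) (σ : Matrix (Fin d1 × Fin d1) (Fin d1 × Fin d1) ℂ)
    (τ : Matrix (Fin d2 × Fin d2) (Fin d2 × Fin d2) ℂ) :
    ptg (c • ctens (1 - σ) (1 - τ) + p • ctens σ τ) =
      reindex (Equiv.prodProdProdComm _ _ _ _) (Equiv.prodProdProdComm _ _ _ _)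
        ((c : ℂ) • (1 - ptg σ) ⊗ₖ (1 - ptg τ) + (p : ℂ) • ptg σ ⊗ₖ ptg τ) := by
  rw [ptg_add, ptg_smul, ptg_smul, ptg_ctens, ptg_ctens, ptg_sub, ptg_sub, ptg_one, ptg_one,
    ctens_eq_reindex_kronecker, ctens_eq_reindex_kronecker, ← Complex.coe_smul,
    ← Complex.coe_smul]
  rfl

end CutTensor

theorem eigenvalues_of_partial_transpose_rhoP_general {d1 d2 : ℕ}
    (μ1 : Fin d1 → ℝ) (μ2 : Fin d2 → ℝ)
    (p : ℝ) :
    (ptg (rhoP μ1 μ2 p)).charpoly.roots =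
      Multiset.map
        (fun z : ℂ × ℂ =>
          (((1 - p) * (1 / ((d1 : ℝ) ^ 2 - 1)) * (1 / ((d2 : ℝ) ^ 2 - 1)) : ℝ) : ℂ)
              * (1 - z.1) * (1 - z.2)
            + (p : ℂ) * z.1 * z.2)
        (Multiset.product
          (ptg (projVec (schmidtVec μ1))).charpoly.roots
          (ptg (projVec (schmidtVec μ2))).charpoly.roots) := by
  have hP1 := isHermitian_ptg (isHermitian_projVec (schmidtVec μ1))
  have hP2 := isHermitian_ptg (isHermitian_projVec (schmidtVec μ2))
  rw [rhoP, ptg_smul_ctens_add, charpoly_reindex, hP1.roots_charpoly_smul_kronecker_add hP2]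
  congr 2
  ext z
  push_cast [div_eq_mul_inv, mul_inv]
  ring

theorem eigenvalues_of_partial_transpose_rhoP {d1 d2 : ℕ}
    (μ1 : Fin d1 → ℝ) (μ2 : Fin d2 → ℝ)
    (h1pos : ∀ i, 0 ≤ μ1 i) (h1norm : ∑ i, μ1 i ^ 2 = 1)
    (h2pos : ∀ i, 0 ≤ μ2 i) (h2norm : ∑ i, μ2 i ^ 2 = 1)
    (p : ℝ) (hp0 : 0 ≤ p) (hp1 : p ≤ 1) :
    (ptg (rhoP μ1 μ2 p)).charpoly.roots =
      Multiset.map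
        (fun z : ℂ × ℂ =>
          (((1 - p) * (1 / ((d1 : ℝ) ^ 2 - 1)) * (1 / ((d2 : ℝ) ^ 2 - 1)) : ℝ) : ℂ)
              * (1 - z.1) * (1 - z.2)
            + (p : ℂ) * z.1 * z.2)
        (Multiset.product
          (ptg (projVec (schmidtVec μ1))).charpoly.roots
          (ptg (projVec (schmidtVec μ2))).charpoly.roots) :=
  eigenvalues_of_partial_transpose_rhoP_general μ1 μ2 p
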